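/- Let f, g ∈ H² and for z ∈ 𝔻 let Ω_z(X) = X T_{φ_z} − T_{φ_{z̄}}* X for bounded operators X on H², where φ_z(w) = (w−z)/(1−z̄w). Then for the rank-one operator f ⊗ g, ‖Ω_z(f ⊗ g)‖ → 0 as |z| → 1. -/

import Mathlib

/-! With `A = S*`, the resolvent identity `z v + T_{φ_{z̄}}* v = (1 - |z|²) (1 - z̄ A)⁻¹ A v`
reduces the theorem to an Abel-type limit: if `‖A‖ ≤ 1` and `Aⁿ u → 0`, then
`(1 - |w|) ‖(1 - w A)⁻¹ u‖ → 0` as `|w| → 1⁻`, seen by cutting the Neumann series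
`∑ (w A)ⁿ u` after `M` terms with `‖A^M u‖` small. For the backward shift `A`, `‖Aⁿ u‖²` is
a tail of the Parseval series of `u`, so `Aⁿ u → 0`. Finally
`Ω_z(f ⊗ g) = f ⊗ (z̄ g + T_{φ_z}* g) - (z f + T_{φ_{z̄}}* f) ⊗ g`. -/

noncomputable section

open Filter Topology ContinuousLinearMap Finset

/- We model the Hardy space `H²` as an abstract complex Hilbert space `H` with Hilbert basis
`c : ℕ → H`; the unilateral shift `S` satisfies `S (c m) = c (m+1)`.  Since `φ_z ∈ H^∞`,
`T_{φ_z} = (S − z)(1 − z̄S)⁻¹`, and `Ω_z(X) = X T_{φ_z} − T_{φ_{z̄}}* X`. -/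

/-- The rank-one operator `x ⊗ y : h ↦ ⟨h, y⟩ x`. -/
noncomputable def rankOne {H : Type*} [NormedAddCommGroup H] [InnerProductSpace ℂ H]
    (x y : H) : H →L[ℂ] H :=
  (innerSL ℂ y).smulRight x

/-- The Toeplitz operator `T_{φ_z} = (S − z)(1 − z̄S)⁻¹` with symbol the Möbius map `φ_z`. -/
noncomputable def toeplitzMobius {H : Type*} [NormedAddCommGroup H] [InnerProductSpace ℂ H]
    (S : H →L[ℂ] H) (z : ℂ) : H →L[ℂ] H :=
  (S - z • (1 : H →L[ℂ] H)) * Ring.inverse (1 - (starRingEnd ℂ z) • S)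

section Resolvent

variable {𝕜 E : Type*} [NontriviallyNormedField 𝕜] [NormedAddCommGroup E] [NormedSpace 𝕜 E]

theorem eventually_norm_lt_one_comap_norm :
    ∀ᶠ w : 𝕜 in comap (‖·‖) (𝓝[<] 1), ‖w‖ < 1 :=
  tendsto_comap.eventually self_mem_nhdsWithin

theorem tendsto_norm_comap_norm_nhdsWithin (s : Set ℝ) (a : ℝ) :
    Tendsto (fun w : 𝕜 => ‖w‖) (comap (‖·‖) (𝓝[s] a)) (𝓝 a) :=
  tendsto_comap.mono_right nhdsWithin_le_nhds

theorem one_sub_norm_mul_norm_inverse_one_sub_apply_le [CompleteSpace E] {T : E →L[𝕜] E}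
    (hT : ‖T‖ < 1) (u : E) :
    (1 - ‖T‖) * ‖Ring.inverse (1 - T) u‖ ≤ ‖u‖ := by
  set y := Ring.inverse (1 - T) u
  have hy : y - T y = u := by
    simpa [y] using congr($(Ring.mul_inverse_cancel _ (isUnit_one_sub_of_norm_lt_one hT)) u)
  have : ‖y‖ ≤ ‖u‖ + ‖T‖ * ‖y‖ :=
    calc ‖y‖ = ‖u + T y‖ := by rw [← hy, sub_add_cancel]
      _ ≤ ‖u‖ + ‖T‖ * ‖y‖ := (norm_add_le _ _).trans (by gcongr; exact le_opNorm _ _)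
  linarith

theorem inverse_one_sub_apply_eq_sum_add {T : E →L[𝕜] E} (hT : IsUnit (1 - T)) (M : ℕ)
    (u : E) :
    Ring.inverse (1 - T) u =
      ∑ i ∈ range M, (T ^ i) u + Ring.inverse (1 - T) ((T ^ M) u) := by
  have h : Ring.inverse (1 - T) = ∑ i ∈ range M, T ^ i + Ring.inverse (1 - T) * T ^ M := by
    rw [← sub_eq_iff_eq_add, ← mul_one_sub, ← mul_neg_geom_sum, ← mul_assoc,
      Ring.inverse_mul_cancel _ hT, one_mul]
  conv_lhs => rw [h]
  simp

theorem one_sub_norm_mul_norm_inverse_one_sub_smul_apply_le [CompleteSpace E] {A : E →L[𝕜] E}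
    (hA : ‖A‖ ≤ 1) {w : 𝕜} (hw : ‖w‖ < 1) (M : ℕ) (u : E) :
    (1 - ‖w‖) * ‖Ring.inverse (1 - w • A) u‖ ≤
      (1 - ‖w‖) * ∑ i ∈ range M, ‖(A ^ i) u‖ + ‖(A ^ M) u‖ := by
  have hwA : ‖w • A‖ ≤ ‖w‖ :=
    (norm_smul_le _ _).trans (mul_le_of_le_one_right (norm_nonneg _) hA)
  have hpow : ∀ i, ‖((w • A) ^ i) u‖ ≤ ‖(A ^ i) u‖ := fun i => by
    rw [smul_pow, smul_apply, norm_smul, norm_pow]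
    exact mul_le_of_le_one_left (norm_nonneg _) (pow_le_one₀ (norm_nonneg _) hw.le)
  have hsum : ‖∑ i ∈ range M, ((w • A) ^ i) u‖ ≤ ∑ i ∈ range M, ‖(A ^ i) u‖ :=
    (norm_sum_le _ _).trans (sum_le_sum fun i _ => hpow i)
  have htail : (1 - ‖w‖) * ‖Ring.inverse (1 - w • A) (((w • A) ^ M) u)‖ ≤ ‖(A ^ M) u‖ :=
    calc _ ≤ (1 - ‖w • A‖) * ‖Ring.inverse (1 - w • A) (((w • A) ^ M) u)‖ := by gcongr
      _ ≤ ‖((w • A) ^ M) u‖ :=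
          one_sub_norm_mul_norm_inverse_one_sub_apply_le (hwA.trans_lt hw) _
      _ ≤ ‖(A ^ M) u‖ := hpow M
  rw [inverse_one_sub_apply_eq_sum_add (isUnit_one_sub_of_norm_lt_one (hwA.trans_lt hw))]
  have h0 : 0 ≤ 1 - ‖w‖ := by linarith
  calc _ ≤ (1 - ‖w‖) * (‖∑ i ∈ range M, ((w • A) ^ i) u‖
          + ‖Ring.inverse (1 - w • A) (((w • A) ^ M) u)‖) := by gcongr; exact norm_add_le _ _
    _ ≤ _ := by rw [mul_add]; gcongr

theorem tendsto_one_sub_norm_mul_norm_inverse_one_sub_smul_apply [CompleteSpace E]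
    {A : E →L[𝕜] E} (hA : ‖A‖ ≤ 1) {u : E} (hu : Tendsto (fun n => (A ^ n) u) atTop (𝓝 0)) :
    Tendsto (fun w : 𝕜 => (1 - ‖w‖) * ‖Ring.inverse (1 - w • A) u‖)
      (comap (‖·‖) (𝓝[<] 1)) (𝓝 0) := by
  rw [Metric.tendsto_nhds]
  intro ε hε
  obtain ⟨M, hM⟩ : ∃ M, ‖(A ^ M) u‖ < ε / 2 :=
    (tendsto_norm_zero.comp hu |>.eventually (gt_mem_nhds (half_pos hε))).exists
  have hhead := ((tendsto_norm_comap_norm_nhdsWithin (𝕜 := 𝕜) (Set.Iio 1) 1).const_sub 1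
    |>.mul_const (∑ i ∈ range M, ‖(A ^ i) u‖)).eventually
    (gt_mem_nhds (show (1 - 1 : ℝ) * _ < ε / 2 by simpa using half_pos hε))
  filter_upwards [eventually_norm_lt_one_comap_norm, hhead] with w hw hw'
  have h0 : 0 ≤ (1 - ‖w‖) * ‖Ring.inverse (1 - w • A) u‖ :=
    mul_nonneg (by linarith) (norm_nonneg _)
  rw [Real.dist_0_eq_abs, abs_of_nonneg h0]
  linarith [one_sub_norm_mul_norm_inverse_one_sub_smul_apply_le hA hw M u]

end Resolvent

theorem HilbertBasis.hasSum_norm_inner_sq {ι 𝕜 E : Type*} [RCLike 𝕜] [NormedAddCommGroup E]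
    [InnerProductSpace 𝕜 E] (b : HilbertBasis ι 𝕜 E) (x : E) :
    HasSum (fun i => ‖(inner 𝕜 (b i) x : 𝕜)‖ ^ 2) (‖x‖ ^ 2) := by
  have h := lp.hasSum_norm (p := 2) (by norm_num) (b.repr x)
  simpa [b.repr_apply_apply] using h

section Shift

variable {𝕜 H : Type*} [RCLike 𝕜] [NormedAddCommGroup H] [InnerProductSpace 𝕜 H]
  {c : HilbertBasis ℕ 𝕜 H} {S : H →L[𝕜] H}

theorem pow_apply_hilbertBasis_of_shift (hS : ∀ m, S (c m) = c (m + 1)) (n j : ℕ) :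
    (S ^ n) (c j) = c (j + n) := by
  induction n with
  | zero => simp
  | succ n ih => rw [pow_succ', mul_apply_eq_comp, ih, hS, add_assoc]

variable [CompleteSpace H]

theorem inner_hilbertBasis_adjoint_pow_apply_of_shift (hS : ∀ m, S (c m) = c (m + 1))
    (n j : ℕ) (x : H) :
    inner 𝕜 (c j) ((adjoint S ^ n) x) = inner 𝕜 (c (j + n)) x := by
  rw [← star_eq_adjoint, ← star_pow, star_eq_adjoint, adjoint_inner_right,
    pow_apply_hilbertBasis_of_shift hS]

theorem hasSum_norm_inner_sq_add_of_shift (hS : ∀ m, S (c m) = c (m + 1)) (n : ℕ) (x : H) :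
    HasSum (fun j => ‖(inner 𝕜 (c (j + n)) x : 𝕜)‖ ^ 2) (‖(adjoint S ^ n) x‖ ^ 2) := by
  have h := c.hasSum_norm_inner_sq ((adjoint S ^ n) x)
  simp only [inner_hilbertBasis_adjoint_pow_apply_of_shift hS] at h
  exact h

theorem norm_adjoint_pow_apply_le_of_shift (hS : ∀ m, S (c m) = c (m + 1)) (n : ℕ) (x : H) :
    ‖(adjoint S ^ n) x‖ ≤ ‖x‖ := by
  have h : ‖(adjoint S ^ n) x‖ ^ 2 ≤ ‖x‖ ^ 2 := by
    refine hasSum_le_inj (· + n) (add_left_injective n) (fun _ _ => sq_nonneg _)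
      (fun _ => ?_) (hasSum_norm_inner_sq_add_of_shift hS n x) (c.hasSum_norm_inner_sq x)
    exact le_rfl
  exact (pow_le_pow_iff_left₀ (norm_nonneg _) (norm_nonneg _) two_ne_zero).mp h

theorem norm_adjoint_le_one_of_shift (hS : ∀ m, S (c m) = c (m + 1)) : ‖adjoint S‖ ≤ 1 :=
  opNorm_le_bound _ zero_le_one fun x => by
    simpa using norm_adjoint_pow_apply_le_of_shift hS 1 x

theorem tendsto_adjoint_pow_apply_of_shift (hS : ∀ m, S (c m) = c (m + 1)) (x : H) :
    Tendsto (fun n => (adjoint S ^ n) x) atTop (𝓝 0) := by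
  have hsq : Tendsto (fun n => ‖(adjoint S ^ n) x‖ ^ 2) atTop (𝓝 0) := by
    have h := tendsto_sum_nat_add fun j => ‖(inner 𝕜 (c j) x : 𝕜)‖ ^ 2
    simp only [(hasSum_norm_inner_sq_add_of_shift hS _ x).tsum_eq] at h
    exact h
  rw [tendsto_zero_iff_norm_tendsto_zero]
  simpa using hsq.sqrt

end Shift

section Toeplitz

variable {H : Type*} [NormedAddCommGroup H] [InnerProductSpace ℂ H]

theorem rankOne_eq_innerProductSpace_rankOne (x y : H) :
    rankOne x y = InnerProductSpace.rankOne ℂ x y :=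
  rfl

variable [CompleteSpace H]

theorem rankOne_comp_sub_adjoint_comp_rankOne (x y : H) (T T' : H →L[ℂ] H) (a : ℂ) :
    rankOne x y ∘L T - adjoint T' ∘L rankOne x y =
      rankOne x (starRingEnd ℂ a • y + adjoint T y) - rankOne (a • x + adjoint T' x) y := by
  ext h
  simp only [rankOne_eq_innerProductSpace_rankOne, sub_apply, coe_comp, Function.comp_apply,
    InnerProductSpace.rankOne_apply, inner_add_left, inner_smul_left, adjoint_inner_left, map_smul,
    Complex.conj_conj, add_smul]
  module

theorem adjoint_toeplitzMobius (S : H →L[ℂ] H) (z : ℂ) :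
    adjoint (toeplitzMobius S z) =
      Ring.inverse (1 - z • adjoint S) * (adjoint S - starRingEnd ℂ z • 1) := by
  rw [← star_eq_adjoint, toeplitzMobius, star_mul, ← Ring.inverse_star]
  simp [star_sub, star_smul, star_eq_adjoint]

theorem smul_add_adjoint_toeplitzMobius_conj_apply {S : H →L[ℂ] H} {z : ℂ}
    (hz : IsUnit (1 - starRingEnd ℂ z • adjoint S)) (v : H) :
    z • v + adjoint (toeplitzMobius S (starRingEnd ℂ z)) v =
      ((1 - ‖z‖ ^ 2 : ℝ) : ℂ) • Ring.inverse (1 - starRingEnd ℂ z • adjoint S) (adjoint S v) := by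
  set B := Ring.inverse (1 - starRingEnd ℂ z • adjoint S)
  have hB : ∀ y, B ((1 - starRingEnd ℂ z • adjoint S) y) = y := fun y => by
    simpa using congr($(Ring.inverse_mul_cancel _ hz) y)
  rw [adjoint_toeplitzMobius, Complex.conj_conj, mul_apply_eq_comp]
  calc z • v + B ((adjoint S - z • 1) v)
      = B ((1 - starRingEnd ℂ z • adjoint S) (z • v) + (adjoint S - z • 1) v) := by
        rw [map_add, hB]
    _ = B (((1 - ‖z‖ ^ 2 : ℝ) : ℂ) • adjoint S v) := by
        rw [Complex.ofReal_sub, Complex.ofReal_one, Complex.ofReal_pow, ← Complex.mul_conj']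
        congr 1
        simp only [sub_apply, smul_apply, map_smul]
        module
    _ = _ := map_smul B _ _

theorem tendsto_conj_comap_norm (l : Filter ℝ) :
    Tendsto (starRingEnd ℂ) (comap (‖·‖) l) (comap (‖·‖) l) :=
  tendsto_comap_iff.mpr (by simpa [Function.comp_def] using tendsto_comap)

theorem tendsto_norm_smul_add_adjoint_toeplitzMobius_conj_apply_of_shift
    {c : HilbertBasis ℕ ℂ H} {S : H →L[ℂ] H} (hS : ∀ m, S (c m) = c (m + 1)) (v : H) :
    Tendsto (fun z : ℂ => ‖z • v + adjoint (toeplitzMobius S (starRingEnd ℂ z)) v‖)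
      (comap (‖·‖) (𝓝[<] 1)) (𝓝 0) := by
  have hA := norm_adjoint_le_one_of_shift hS
  have hres := (tendsto_one_sub_norm_mul_norm_inverse_one_sub_smul_apply hA
    (tendsto_adjoint_pow_apply_of_shift hS (adjoint S v))).comp (tendsto_conj_comap_norm _)
  have hlim := ((tendsto_norm_comap_norm_nhdsWithin _ _).const_add 1).mul hres
  rw [mul_zero] at hlim
  refine hlim.congr' ?_
  filter_upwards [eventually_norm_lt_one_comap_norm] with z hz
  have hunit : IsUnit (1 - starRingEnd ℂ z • adjoint S) := isUnit_one_sub_of_norm_lt_one <|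
    (norm_smul_le _ _).trans_lt <| by
      simpa using mul_lt_one_of_nonneg_of_lt_one_left (norm_nonneg z) hz hA
  rw [smul_add_adjoint_toeplitzMobius_conj_apply hunit, norm_smul, Complex.norm_real,
    Real.norm_of_nonneg (by nlinarith [norm_nonneg z]), Function.comp_apply, Complex.norm_conj]
  ring

end Toeplitz

/-- for `f, g ∈ H²`, `‖Ω_z(f ⊗ g)‖ → 0` as `|z| → 1`, where
`Ω_z(X) = X T_{φ_z} − T_{φ_{z̄}}* X`. -/
theorem stmt15 {H : Type*} [NormedAddCommGroup H] [InnerProductSpace ℂ H] [CompleteSpace H]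
    (c : HilbertBasis ℕ ℂ H) (S : H →L[ℂ] H)
    (hS : ∀ m : ℕ, S (c m) = c (m + 1)) (f g : H) :
    Tendsto
      (fun z : ℂ =>
        ‖rankOne f g ∘L toeplitzMobius S z -
            ContinuousLinearMap.adjoint (toeplitzMobius S (starRingEnd ℂ z)) ∘L rankOne f g‖)
      (comap (fun z : ℂ => ‖z‖) (nhdsWithin 1 (Set.Iio 1))) (nhds 0) := by
  have hf := tendsto_norm_smul_add_adjoint_toeplitzMobius_conj_apply_of_shift hS f
  have hg := (tendsto_norm_smul_add_adjoint_toeplitzMobius_conj_apply_of_shift hS g).comp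
    (tendsto_conj_comap_norm _)
  simp only [Function.comp_def, Complex.conj_conj] at hg
  refine squeeze_zero (fun _ => norm_nonneg _) (fun z => ?_)
    (by simpa using (hg.const_mul ‖f‖).add (hf.mul_const ‖g‖))
  rw [rankOne_comp_sub_adjoint_comp_rankOne f g _ _ z]
  refine (norm_sub_le _ _).trans_eq ?_
  simp only [rankOne_eq_innerProductSpace_rankOne, InnerProductSpace.norm_rankOne]
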